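/- arXiv:1709.09045 — 3 statements merged into one kernel-verified Lean document; each statement's English description precedes it below -/
import Mathlib

section
/- Let (X_1,…,X_n) and (Y_1,…,Y_n) be H-frames on an open set V ⊆ ℝⁿ, let a ∈ V, and suppose that near a one has Y_i = Σ_{j : w_j ≤ w_i} c_{ij} X_j and X_i = Σ_{j : w_j ≤ w_i} d_{ij} Y_j for smooth functions c_{ij}, d_{ij}. If a smooth function f defined near a has order N at a with respect to the H-frame (X_1,…,X_n), then f has order N at a with respect to the H-frame (Y_1,…,Y_n). -/
open scoped BigOperators
open Filter Topology

namespace Carnot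

/-- Anisotropic dilation `t · x = (t^{w_1} x_1, …, t^{w_n} x_n)`. -/
def dil {n : ℕ} (w : Fin n → ℕ) (t : ℝ) (x : Fin n → ℝ) : Fin n → ℝ :=
  fun i => t ^ (w i) * x i

/-- Weighted length `⟨α⟩` of a multi-index. -/
def wlen {n : ℕ} (w : Fin n → ℕ) (α : Fin n → ℕ) : ℕ := ∑ i, w i * α i

/-- Length `|α|` of a multi-index. -/
def mlen {n : ℕ} (α : Fin n → ℕ) : ℕ := ∑ i, α i

/-- A vector field acting on a function: `(Xf)(x) = Df(x)[X(x)]`. -/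
noncomputable def vf {n : ℕ} (X : (Fin n → ℝ) → (Fin n → ℝ)) (f : (Fin n → ℝ) → ℝ) :
    (Fin n → ℝ) → ℝ :=
  fun x => fderiv ℝ f x (X x)

/-- Iterated action `X_I f = X_{i_1}(X_{i_2}(⋯(X_{i_k} f)))`. -/
noncomputable def vfSeq {n : ℕ} (X : Fin n → (Fin n → ℝ) → (Fin n → ℝ)) :
    List (Fin n) → ((Fin n → ℝ) → ℝ) → ((Fin n → ℝ) → ℝ)
  | [], f => f
  | i :: I, f => vf (X i) (vfSeq X I f)

/-- Weight `⟨I⟩` of a finite sequence of indices. -/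
def seqW {n : ℕ} (w : Fin n → ℕ) (I : List (Fin n)) : ℕ := (I.map w).sum

/-- The list `(1,…,1,2,…,2,…,n,…,n)` with `i` repeated `α i` times. -/
def multiList {n : ℕ} (α : Fin n → ℕ) : List (Fin n) :=
  (List.finRange n).flatMap fun i => List.replicate (α i) i

/-- `X^α f = X_1^{α_1} ⋯ X_n^{α_n} f`. -/
noncomputable def vfPow {n : ℕ} (X : Fin n → (Fin n → ℝ) → (Fin n → ℝ)) (α : Fin n → ℕ)
    (f : (Fin n → ℝ) → ℝ) : (Fin n → ℝ) → ℝ :=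
  vfSeq X (multiList α) f

/-- Partial derivative `∂^α f`. -/
noncomputable def pdPow {n : ℕ} (α : Fin n → ℕ) (f : (Fin n → ℝ) → ℝ) : (Fin n → ℝ) → ℝ :=
  vfPow (fun i => fun _ => Pi.single i (1 : ℝ)) α f

/-- Lie bracket of two vector fields. -/
noncomputable def lieBk {n : ℕ} (X Y : (Fin n → ℝ) → (Fin n → ℝ)) : (Fin n → ℝ) → (Fin n → ℝ) :=
  fun x => fderiv ℝ Y x (X x) - fderiv ℝ X x (Y x)

/-- A weight sequence: non-decreasing, positive, starting at `1`. -/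
structure IsWeight {n : ℕ} (w : Fin n → ℕ) : Prop where
  mono : Monotone w
  pos : ∀ i, 0 < w i
  first : ∀ h : 0 < n, w ⟨0, h⟩ = 1

/-- An `H`-frame on `V`. -/
structure IsHFrame {n : ℕ} (w : Fin n → ℕ) (X : Fin n → (Fin n → ℝ) → (Fin n → ℝ))
    (V : Set (Fin n → ℝ)) : Prop where
  smooth : ∀ j, ContDiffOn ℝ (⊤ : ℕ∞) (X j) V
  basis : ∀ x ∈ V, LinearIndependent ℝ fun j => X j x
  bracket : ∃ L : Fin n → Fin n → Fin n → (Fin n → ℝ) → ℝ,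
    (∀ i j k, ContDiffOn ℝ (⊤ : ℕ∞) (L i j k) V) ∧
    (∀ i j k, ¬ w k ≤ w i + w j → ∀ x ∈ V, L i j k x = 0) ∧
    ∀ i j, ∀ x ∈ V, lieBk (X i) (X j) x = ∑ k, L i j k x • X k x

/-- `f` has order `≥ N` at `a` with respect to the frame `X`. -/
def OrderGe {n : ℕ} (w : Fin n → ℕ) (X : Fin n → (Fin n → ℝ) → (Fin n → ℝ))
    (f : (Fin n → ℝ) → ℝ) (a : Fin n → ℝ) (N : ℕ) : Prop :=
  ∀ I : List (Fin n), seqW w I < N → vfSeq X I f a = 0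

/-- `f` has order exactly `N` at `a` with respect to the frame `X`. -/
def OrderEq {n : ℕ} (w : Fin n → ℕ) (X : Fin n → (Fin n → ℝ) → (Fin n → ℝ))
    (f : (Fin n → ℝ) → ℝ) (a : Fin n → ℝ) (N : ℕ) : Prop :=
  OrderGe w X f a N ∧ ∃ I : List (Fin n), seqW w I = N ∧ vfSeq X I f a ≠ 0

/-- `f` has weight `≥ N`. -/
def WeightGe {n : ℕ} (w : Fin n → ℕ) (f : (Fin n → ℝ) → ℝ) (N : ℤ) : Prop :=
  ∀ α : Fin n → ℕ, (wlen w α : ℤ) < N → pdPow α f 0 = 0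

/-- `f` has weight exactly `N`. -/
def WeightEq {n : ℕ} (w : Fin n → ℕ) (f : (Fin n → ℝ) → ℝ) (N : ℤ) : Prop :=
  WeightGe w f N ∧ ∃ α : Fin n → ℕ, (wlen w α : ℤ) = N ∧ pdPow α f 0 ≠ 0

/-- A pseudo-norm for the anisotropic dilations. -/
structure IsPseudoNorm {n : ℕ} (w : Fin n → ℕ) (ρ : (Fin n → ℝ) → ℝ) : Prop where
  cont : Continuous ρ
  nonneg : ∀ x, 0 ≤ ρ x
  pos : ∀ x, x ≠ 0 → 0 < ρ x
  homog : ∀ t x, ρ (dil w t x) = |t| * ρ x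

/-- Multi-indices with all entries `< B`. -/
def mIdx (n B : ℕ) : Finset (Fin n → ℕ) := Fintype.piFinset fun _ => Finset.range B

/-- The monomial `x^α`. -/
def monom {n : ℕ} (α : Fin n → ℕ) (x : Fin n → ℝ) : ℝ := ∏ i, x i ^ α i

/-- Taylor coefficient `(1/α!) ∂^α f(0)`. -/
noncomputable def taylorCoeff {n : ℕ} (α : Fin n → ℕ) (f : (Fin n → ℝ) → ℝ) : ℝ :=
  ((∏ i, Nat.factorial (α i) : ℕ) : ℝ)⁻¹ * pdPow α f 0

/-- The homogeneous part `f^[ℓ]` of degree `ℓ` of the Taylor series of `f` at `0`. -/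
noncomputable def homPart {n : ℕ} (w : Fin n → ℕ) (f : (Fin n → ℝ) → ℝ) (ℓ : ℕ) :
    (Fin n → ℝ) → ℝ :=
  fun x => ∑ α ∈ (mIdx n (ℓ + 1)).filter (fun α => wlen w α = ℓ),
    taylorCoeff α f * monom α x

/-- `u_t = O(t^m)` in `C^∞(U)` as `t → 0`. -/
def BigOC {n : ℕ} (U : Set (Fin n → ℝ)) (u : ℝ → (Fin n → ℝ) → ℝ) (m : ℤ) : Prop :=
  ∀ K : Set (Fin n → ℝ), K ⊆ U → IsCompact K → ∀ β : Fin n → ℕ,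
    ∃ C : ℝ, ∀ᶠ t in 𝓝[≠] (0 : ℝ), ∀ x ∈ K, |pdPow β (u t) x| ≤ C * |t| ^ m

/-- Componentwise `O(t^m)` in `C^∞(U)` for families of vector fields. -/
def BigOCVF {n : ℕ} (U : Set (Fin n → ℝ)) (u : ℝ → (Fin n → ℝ) → Fin n → ℝ)
    (m : ℤ) : Prop :=
  ∀ K : Set (Fin n → ℝ), K ⊆ U → IsCompact K → ∀ β : Fin n → ℕ, ∀ k : Fin n,
    ∃ C : ℝ, ∀ᶠ t in 𝓝[≠] (0 : ℝ), ∀ x ∈ K,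
      |pdPow β (fun y => u t y k) x| ≤ C * |t| ^ m

/-- `Θ = O_w(‖x‖^{w+m})` near `x = 0`. -/
def IsOw {n : ℕ} (w : Fin n → ℕ) (ρ : (Fin n → ℝ) → ℝ)
    (Θ : (Fin n → ℝ) → (Fin n → ℝ)) (m : ℤ) : Prop :=
  ∀ k, ∃ C : ℝ, ∀ᶠ x in 𝓝 (0 : Fin n → ℝ), |Θ x k| ≤ C * ρ x ^ ((w k : ℤ) + m)

/-- A `w`-homogeneous map. -/
def WHomog {n : ℕ} (w : Fin n → ℕ) (φ : (Fin n → ℝ) → (Fin n → ℝ)) : Prop :=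
  ∀ t x, φ (dil w t x) = dil w t (φ x)

/-- A map whose components are polynomial functions. -/
def IsPolyMap {n : ℕ} (φ : (Fin n → ℝ) → (Fin n → ℝ)) : Prop :=
  ∀ k, ∃ p : MvPolynomial (Fin n) ℝ, ∀ x, φ x k = MvPolynomial.eval x p

/-- A vector field homogeneous of degree `m`: `δ_t^* Y = t^m Y` for `t ≠ 0`. -/
def VFHomog {n : ℕ} (w : Fin n → ℕ) (Y : (Fin n → ℝ) → (Fin n → ℝ)) (m : ℤ) : Prop :=
  ∀ t : ℝ, t ≠ 0 → ∀ x k, (t : ℝ) ^ (-(w k : ℤ)) * Y (dil w t x) k = t ^ m * Y x k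

/-- A vector field has weight `W`: each component `X_k` has weight `≥ W + w_k`,
with equality for some `k`. -/
def VFWeightEq {n : ℕ} (w : Fin n → ℕ) (X : (Fin n → ℝ) → (Fin n → ℝ)) (W : ℤ) :
    Prop :=
  (∀ k, ∀ α : Fin n → ℕ, (wlen w α : ℤ) < W + w k →
    pdPow α (fun y => X y k) 0 = 0) ∧
  ∃ k, ∃ α : Fin n → ℕ, (wlen w α : ℤ) = W + w k ∧ pdPow α (fun y => X y k) 0 ≠ 0

/-- The homogeneous part `X^[ℓ]` of degree `ℓ` of a vector field. -/
noncomputable def vfPart {n : ℕ} (w : Fin n → ℕ) (X : (Fin n → ℝ) → (Fin n → ℝ)) (ℓ : ℤ) :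
    (Fin n → ℝ) → Fin n → ℝ :=
  fun x k => ∑ α ∈ (mIdx n ((ℓ + w k).toNat + 1)).filter
      (fun α => (wlen w α : ℤ) = ℓ + w k),
    taylorCoeff α (fun y => X y k) * monom α x

/-- `φ` produces privileged coordinates at `a` adapted to the `H`-frame `X`:
it is linearly adapted at `a` and each component has order `w_k` at `a`. -/
def PrivilegedAt {n : ℕ} (w : Fin n → ℕ) (X : Fin n → (Fin n → ℝ) → (Fin n → ℝ))
    (a : Fin n → ℝ) (φ : (Fin n → ℝ) → (Fin n → ℝ)) : Prop :=
  (∀ j, fderiv ℝ φ a (X j a) = Pi.single j 1) ∧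
  ∀ k, OrderEq w X (fun x => φ x k) a (w k)



section Aux

variable {n : ℕ}

/-- Smoothness of `vf Z g` on an open set. -/
lemma vf_smoothOn {W : Set (Fin n → ℝ)} (hW : IsOpen W)
    {Z : (Fin n → ℝ) → (Fin n → ℝ)} {g : (Fin n → ℝ) → ℝ}
    (hZ : ContDiffOn ℝ (⊤ : ℕ∞) Z W) (hg : ContDiffOn ℝ (⊤ : ℕ∞) g W) :
    ContDiffOn ℝ (⊤ : ℕ∞) (vf Z g) W :=
  (hg.fderiv_of_isOpen hW (by simp)).clm_apply hZ

lemma vfSeq_smoothOn {W : Set (Fin n → ℝ)} (hW : IsOpen W)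
    {X : Fin n → (Fin n → ℝ) → (Fin n → ℝ)} {f : (Fin n → ℝ) → ℝ}
    (hX : ∀ j, ContDiffOn ℝ (⊤ : ℕ∞) (X j) W) (hf : ContDiffOn ℝ (⊤ : ℕ∞) f W) :
    ∀ I : List (Fin n), ContDiffOn ℝ (⊤ : ℕ∞) (vfSeq X I f) W
  | [] => hf
  | i :: I => vf_smoothOn hW (hX i) (vfSeq_smoothOn hW hX hf I)

/-- `g` is representable on `W` as a smooth combination of `X_J f` with `⟨J⟩ ≤ m`. -/
def Rep (w : Fin n → ℕ) (X : Fin n → (Fin n → ℝ) → (Fin n → ℝ)) (f : (Fin n → ℝ) → ℝ)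
    (W : Set (Fin n → ℝ)) (m : ℕ) (g : (Fin n → ℝ) → ℝ) : Prop :=
  ∃ T : Finset (List (Fin n)), ∃ e : List (Fin n) → (Fin n → ℝ) → ℝ,
    (∀ J ∈ T, seqW w J ≤ m) ∧ (∀ J ∈ T, ContDiffOn ℝ (⊤ : ℕ∞) (e J) W) ∧
    ∀ x ∈ W, g x = ∑ J ∈ T, e J x * vfSeq X J f x

variable {w : Fin n → ℕ} {X : Fin n → (Fin n → ℝ) → (Fin n → ℝ)} {f : (Fin n → ℝ) → ℝ}
  {W : Set (Fin n → ℝ)}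

lemma Rep.congr {m : ℕ} {g g' : (Fin n → ℝ) → ℝ} (h : Rep w X f W m g)
    (hgg : ∀ x ∈ W, g' x = g x) : Rep w X f W m g' := by
  obtain ⟨T, e, h1, h2, h3⟩ := h
  exact ⟨T, e, h1, h2, fun x hx => (hgg x hx).trans (h3 x hx)⟩

lemma Rep.mono {m m' : ℕ} (hmm : m ≤ m') {g : (Fin n → ℝ) → ℝ} (h : Rep w X f W m g) :
    Rep w X f W m' g := by
  obtain ⟨T, e, h1, h2, h3⟩ := h
  exact ⟨T, e, fun J hJ => (h1 J hJ).trans hmm, h2, h3⟩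

lemma Rep.zero {m : ℕ} : Rep w X f W m (fun _ => 0) :=
  ⟨∅, fun _ => fun _ => 0, by simp, by simp, by simp⟩

lemma Rep.add {m : ℕ} {g1 g2 : (Fin n → ℝ) → ℝ} (h1 : Rep w X f W m g1)
    (h2 : Rep w X f W m g2) : Rep w X f W m (fun x => g1 x + g2 x) := by
  classical
  obtain ⟨T1, e1, hT1, he1, hg1⟩ := h1
  obtain ⟨T2, e2, hT2, he2, hg2⟩ := h2
  refine ⟨T1 ∪ T2, fun J => fun x => (if J ∈ T1 then e1 J x else 0) +
      (if J ∈ T2 then e2 J x else 0), ?_, ?_, ?_⟩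
  · intro J hJ
    rcases Finset.mem_union.1 hJ with h | h
    · exact hT1 J h
    · exact hT2 J h
  · intro J _
    apply ContDiffOn.add
    · split
      · exact he1 J ‹_›
      · exact contDiffOn_const
    · split
      · exact he2 J ‹_›
      · exact contDiffOn_const
  · intro x hx
    beta_reduce
    rw [hg1 x hx, hg2 x hx]
    rw [Finset.sum_congr rfl (fun J _ => add_mul _ _ _), Finset.sum_add_distrib]
    congr 1
    · simp only [ite_mul, zero_mul]
      rw [Finset.sum_ite_mem, Finset.union_inter_cancel_left]
    · simp only [ite_mul, zero_mul]
      rw [Finset.sum_ite_mem, Finset.union_inter_cancel_right]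

lemma Rep.sum {m : ℕ} {ι : Type*} (s : Finset ι) (u : ι → (Fin n → ℝ) → ℝ)
    (h : ∀ j ∈ s, Rep w X f W m (u j)) :
    Rep w X f W m (fun x => ∑ j ∈ s, u j x) := by
  classical
  induction s using Finset.induction with
  | empty => exact Rep.zero.congr (by simp)
  | @insert j s hns ih =>
    have := (h j (Finset.mem_insert_self j s)).add
      (ih (fun i hi => h i (Finset.mem_insert_of_mem hi)))
    exact this.congr (fun x hx => by beta_reduce; rw [Finset.sum_insert hns])

lemma Rep.smul {m : ℕ} {g : (Fin n → ℝ) → ℝ} {c : (Fin n → ℝ) → ℝ}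
    (hc : ContDiffOn ℝ (⊤ : ℕ∞) c W) (h : Rep w X f W m g) :
    Rep w X f W m (fun x => c x * g x) := by
  obtain ⟨T, e, hT, he, hg⟩ := h
  refine ⟨T, fun J => fun x => c x * e J x, hT,
    fun J hJ => hc.mul (he J hJ), fun x hx => ?_⟩
  beta_reduce
  rw [hg x hx, Finset.mul_sum]
  exact Finset.sum_congr rfl fun J _ => (mul_assoc _ _ _).symm

lemma Rep.vfStep (hW : IsOpen W) (hX : ∀ j, ContDiffOn ℝ (⊤ : ℕ∞) (X j) W)
    (hf : ContDiffOn ℝ (⊤ : ℕ∞) f W) {m : ℕ} {g : (Fin n → ℝ) → ℝ} (h : Rep w X f W m g)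
    (j : Fin n) : Rep w X f W (w j + m) (vf (X j) g) := by
  classical
  obtain ⟨T, e, hT, he, hg⟩ := h
  have hu : ∀ J, ContDiffOn ℝ (⊤ : ℕ∞) (vfSeq X J f) W := vfSeq_smoothOn hW hX hf
  -- differentiability helpers
  have hdiff : ∀ (x : Fin n → ℝ), x ∈ W → ∀ J ∈ T,
      DifferentiableAt ℝ (e J) x ∧ DifferentiableAt ℝ (vfSeq X J f) x := by
    intro x hx J hJ
    constructor
    · exact (((he J hJ).differentiableOn (by simp)) x hx).differentiableAt (hW.mem_nhds hx)
    · exact (((hu J).differentiableOn (by simp)) x hx).differentiableAt (hW.mem_nhds hx)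
  -- pointwise formula for vf (X j) g on W
  have key : ∀ x ∈ W, vf (X j) g x =
      ∑ J ∈ T, (e J x * vfSeq X (j :: J) f x + vfSeq X J f x * vf (X j) (e J) x) := by
    intro x hx
    have hEq : g =ᶠ[𝓝 x] fun y => ∑ J ∈ T, e J y * vfSeq X J f y := by
      filter_upwards [hW.mem_nhds hx] with y hy using hg y hy
    have h1 : fderiv ℝ g x = fderiv ℝ (fun y => ∑ J ∈ T, e J y * vfSeq X J f y) x :=
      hEq.fderiv_eq
    have h2 : fderiv ℝ (fun y => ∑ J ∈ T, e J y * vfSeq X J f y) x =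
        ∑ J ∈ T, fderiv ℝ (fun y => e J y * vfSeq X J f y) x :=
      fderiv_fun_sum fun J hJ => ((hdiff x hx J hJ).1).mul ((hdiff x hx J hJ).2)
    show fderiv ℝ g x (X j x) = _
    rw [h1, h2, ContinuousLinearMap.sum_apply]
    refine Finset.sum_congr rfl fun J hJ => ?_
    rw [fderiv_fun_mul (hdiff x hx J hJ).1 (hdiff x hx J hJ).2]
    simp only [ContinuousLinearMap.add_apply, ContinuousLinearMap.smul_apply,
      smul_eq_mul]
    rfl
  -- the two pieces
  have hA : Rep w X f W (w j + m) (fun x => ∑ J ∈ T, vfSeq X J f x * vf (X j) (e J) x) := by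
    refine ⟨T, fun J => vf (X j) (e J),
      fun J hJ => (hT J hJ).trans (Nat.le_add_left m (w j)), ?_, ?_⟩
    · intro J hJ
      exact vf_smoothOn hW (hX j) (he J hJ)
    · intro x hx
      beta_reduce
      exact Finset.sum_congr rfl fun J hJ => mul_comm _ _
  have hB : Rep w X f W (w j + m) (fun x => ∑ J ∈ T, e J x * vfSeq X (j :: J) f x) := by
    refine ⟨T.image (fun J => j :: J), fun J' => fun x => e J'.tail x,
      ?_, ?_, ?_⟩
    · intro J' hJ'
      obtain ⟨J, hJ, rfl⟩ := Finset.mem_image.1 hJ'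
      have : seqW w (j :: J) = w j + seqW w J := by
        simp [seqW, List.map_cons]
      rw [this]
      exact Nat.add_le_add_left (hT J hJ) _
    · intro J' hJ'
      obtain ⟨J, hJ, rfl⟩ := Finset.mem_image.1 hJ'
      exact he J hJ
    · intro x hx
      beta_reduce
      rw [Finset.sum_image (fun a _ b _ h => by injection h)]
      simp only [List.tail_cons]
  exact (hB.add hA).congr (fun x hx => by
    beta_reduce
    rw [key x hx, Finset.sum_add_distrib])

/-- Main lemma: if `Y i = ∑_{w j ≤ w i} c i j • X j` on `W`, then `Y_I f` is a smooth
combination of the `X_J f`, `⟨J⟩ ≤ ⟨I⟩`, on `W`. -/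
lemma rep_vfSeq (hW : IsOpen W) (hX : ∀ j, ContDiffOn ℝ (⊤ : ℕ∞) (X j) W)
    (hf : ContDiffOn ℝ (⊤ : ℕ∞) f W)
    {Y : Fin n → (Fin n → ℝ) → (Fin n → ℝ)} {c : Fin n → Fin n → (Fin n → ℝ) → ℝ}
    (hc : ∀ i j, ContDiffOn ℝ (⊤ : ℕ∞) (c i j) W)
    (hYX : ∀ i, ∀ x ∈ W, Y i x =
      ∑ j ∈ Finset.univ.filter (fun j => w j ≤ w i), c i j x • X j x) :
    ∀ I : List (Fin n), Rep w X f W (seqW w I) (vfSeq Y I f)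
  | [] => ⟨{[]}, fun _ => fun _ => 1, by simp [seqW], by simp [contDiffOn_const],
      by simp [vfSeq]⟩
  | i :: I => by
    have hI := rep_vfSeq hW hX hf hc hYX I
    have key : ∀ x ∈ W, vfSeq Y (i :: I) f x =
        ∑ j ∈ Finset.univ.filter (fun j => w j ≤ w i),
          c i j x * vf (X j) (vfSeq Y I f) x := by
      intro x hx
      show fderiv ℝ (vfSeq Y I f) x (Y i x) = _
      rw [hYX i x hx, map_sum]
      exact Finset.sum_congr rfl fun j _ => by
        rw [map_smul]; rfl
    have hrep : Rep w X f W (seqW w (i :: I))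
        (fun x => ∑ j ∈ Finset.univ.filter (fun j => w j ≤ w i),
          c i j x * vf (X j) (vfSeq Y I f) x) := by
      refine Rep.sum _ _ fun j hj => ?_
      have hji : w j ≤ w i := (Finset.mem_filter.1 hj).2
      have h1 : Rep w X f W (w j + seqW w I) (vf (X j) (vfSeq Y I f)) :=
        hI.vfStep hW hX hf j
      have h2 := (h1.smul (hc i j)).mono (m' := seqW w (i :: I)) (by
        have : seqW w (i :: I) = w i + seqW w I := by simp [seqW, List.map_cons]
        rw [this]
        exact Nat.add_le_add_right hji _)
      exact h2
    exact hrep.congr key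

end Aux

/-- The order of a function at a point is independent of the choice
of the `H`-frame. -/
theorem order_independent_of_frame
    {n : ℕ} (hn : 0 < n) {w : Fin n → ℕ} (hw : IsWeight w)
    {V : Set (Fin n → ℝ)} (hV : IsOpen V)
    {X Y : Fin n → (Fin n → ℝ) → (Fin n → ℝ)}
    (hX : IsHFrame w X V) (hY : IsHFrame w Y V)
    {a : Fin n → ℝ} (ha : a ∈ V)
    (c d : Fin n → Fin n → (Fin n → ℝ) → ℝ)
    {U : Set (Fin n → ℝ)} (hU : U ∈ 𝓝 a)
    (hc : ∀ i j, ContDiffOn ℝ (⊤ : ℕ∞) (c i j) U)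
    (hd : ∀ i j, ContDiffOn ℝ (⊤ : ℕ∞) (d i j) U)
    (hYX : ∀ i, ∀ x ∈ U, Y i x =
      ∑ j ∈ Finset.univ.filter (fun j => w j ≤ w i), c i j x • X j x)
    (hXY : ∀ i, ∀ x ∈ U, X i x =
      ∑ j ∈ Finset.univ.filter (fun j => w j ≤ w i), d i j x • Y j x)
    {f : (Fin n → ℝ) → ℝ} {Uf : Set (Fin n → ℝ)} (hUf : Uf ∈ 𝓝 a)
    (hf : ContDiffOn ℝ (⊤ : ℕ∞) f Uf)
    {N : ℕ} (hord : OrderEq w X f a N) :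
    OrderEq w Y f a N := by
  classical
  -- the common open neighborhood
  set W : Set (Fin n → ℝ) := V ∩ (interior U ∩ interior Uf) with hWdef
  have hWopen : IsOpen W := hV.inter (isOpen_interior.inter isOpen_interior)
  have haW : a ∈ W :=
    ⟨ha, mem_interior_iff_mem_nhds.2 hU, mem_interior_iff_mem_nhds.2 hUf⟩
  have hWV : W ⊆ V := fun x hx => hx.1
  have hWU : W ⊆ U := fun x hx => interior_subset hx.2.1
  have hWUf : W ⊆ Uf := fun x hx => interior_subset hx.2.2
  have hfW : ContDiffOn ℝ (⊤ : ℕ∞) f W := hf.mono hWUf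
  have hXW : ∀ j, ContDiffOn ℝ (⊤ : ℕ∞) (X j) W := fun j => (hX.smooth j).mono hWV
  have hYW : ∀ j, ContDiffOn ℝ (⊤ : ℕ∞) (Y j) W := fun j => (hY.smooth j).mono hWV
  have hcW : ∀ i j, ContDiffOn ℝ (⊤ : ℕ∞) (c i j) W := fun i j => (hc i j).mono hWU
  have hdW : ∀ i j, ContDiffOn ℝ (⊤ : ℕ∞) (d i j) W := fun i j => (hd i j).mono hWU
  have hYXW : ∀ i, ∀ x ∈ W, Y i x =
      ∑ j ∈ Finset.univ.filter (fun j => w j ≤ w i), c i j x • X j x :=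
    fun i x hx => hYX i x (hWU hx)
  have hXYW : ∀ i, ∀ x ∈ W, X i x =
      ∑ j ∈ Finset.univ.filter (fun j => w j ≤ w i), d i j x • Y j x :=
    fun i x hx => hXY i x (hWU hx)
  -- Order ≥ N w.r.t. Y
  have hge : OrderGe w Y f a N := by
    intro I hIN
    obtain ⟨T, e, hT, _, hrep⟩ := rep_vfSeq hWopen hXW hfW hcW hYXW I
    rw [hrep a haW]
    refine Finset.sum_eq_zero fun J hJ => ?_
    rw [hord.1 J (lt_of_le_of_lt (hT J hJ) hIN), mul_zero]
  refine ⟨hge, ?_⟩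
  -- exact order
  by_contra hcon
  push_neg at hcon
  have hzero : ∀ J : List (Fin n), seqW w J ≤ N → vfSeq Y J f a = 0 := by
    intro J hJ
    rcases lt_or_eq_of_le hJ with h | h
    · exact hge J h
    · exact hcon J h
  obtain ⟨I, hIN, hIne⟩ := hord.2
  apply hIne
  obtain ⟨T, e, hT, _, hrep⟩ := rep_vfSeq hWopen hYW hfW hdW hXYW I
  rw [hrep a haW]
  refine Finset.sum_eq_zero fun J hJ => ?_
  rw [hzero J (hIN ▸ hT J hJ), mul_zero]


end Carnot
end

section
/- Let (X_1,…,X_n) be an H-frame on an open set V ⊆ ℝⁿ and a ∈ V. If f and g are smooth functions near a of respective orders N and N' at a, then the product fg has order ≥ N + N' at a. -/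
open scoped BigOperators
open Filter Topology

namespace Carnot

/-- All order-preserving splittings of a list into two subsequences. -/
def splits {n : ℕ} : List (Fin n) → List (List (Fin n) × List (Fin n))
  | [] => [([], [])]
  | i :: I => (splits I).flatMap fun p => [(i :: p.1, p.2), (p.1, i :: p.2)]

lemma seqW_cons {n : ℕ} (w : Fin n → ℕ) (i : Fin n) (I : List (Fin n)) :
    seqW w (i :: I) = w i + seqW w I := by
  simp [seqW]

lemma splits_seqW {n : ℕ} (w : Fin n → ℕ) :
    ∀ I : List (Fin n), ∀ p ∈ splits I, seqW w p.1 + seqW w p.2 = seqW w I := by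
  intro I
  induction I with
  | nil =>
    intro p hp
    simp only [splits, List.mem_singleton] at hp
    subst hp
    simp [seqW]
  | cons i I ih =>
    intro p hp
    simp only [splits, List.mem_flatMap] at hp
    obtain ⟨q, hq, hpq⟩ := hp
    have := ih q hq
    simp only [List.mem_cons, List.mem_singleton, List.not_mem_nil, or_false] at hpq
    rcases hpq with rfl | rfl <;> simp [seqW_cons] <;> omega

lemma vfSeq_contDiffOn {n : ℕ} {X : Fin n → (Fin n → ℝ) → (Fin n → ℝ)}
    {U : Set (Fin n → ℝ)} (hU : IsOpen U)
    (hXs : ∀ j, ContDiffOn ℝ (⊤ : ℕ∞) (X j) U) {f : (Fin n → ℝ) → ℝ}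
    (hf : ContDiffOn ℝ (⊤ : ℕ∞) f U) :
    ∀ I : List (Fin n), ContDiffOn ℝ (⊤ : ℕ∞) (vfSeq X I f) U := by
  intro I
  induction I with
  | nil => exact hf
  | cons i I ih =>
    have hd : ContDiffOn ℝ (⊤ : ℕ∞) (fderiv ℝ (vfSeq X I f)) U :=
      ih.fderiv_of_isOpen hU (by simp)
    exact hd.clm_apply (hXs i)

lemma diffAt_listSum {n : ℕ} {ι : Type*} (l : List ι) (φ : ι → (Fin n → ℝ) → ℝ)
    (x : Fin n → ℝ) (h : ∀ i ∈ l, DifferentiableAt ℝ (φ i) x) :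
    DifferentiableAt ℝ (fun y => (l.map (fun i => φ i y)).sum) x := by
  induction l with
  | nil => simpa using differentiableAt_const (0 : ℝ)
  | cons i l ih =>
    simp only [List.map_cons, List.sum_cons]
    exact (h i (by simp)).add (ih fun j hj => h j (by simp [hj]))

lemma fderiv_listSum {n : ℕ} {ι : Type*} (l : List ι) (φ : ι → (Fin n → ℝ) → ℝ)
    (x v : Fin n → ℝ) (h : ∀ i ∈ l, DifferentiableAt ℝ (φ i) x) :
    fderiv ℝ (fun y => (l.map (fun i => φ i y)).sum) x v =
      (l.map (fun i => fderiv ℝ (φ i) x v)).sum := by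
  induction l with
  | nil => simp
  | cons i l ih =>
    simp only [List.map_cons, List.sum_cons]
    rw [fderiv_fun_add (h i (by simp))
      (diffAt_listSum l φ x fun j hj => h j (by simp [hj]))]
    simp [ih fun j hj => h j (by simp [hj])]

lemma vfSeq_mul {n : ℕ} {X : Fin n → (Fin n → ℝ) → (Fin n → ℝ)}
    {U : Set (Fin n → ℝ)} (hU : IsOpen U)
    (hXs : ∀ j, ContDiffOn ℝ (⊤ : ℕ∞) (X j) U) {f g : (Fin n → ℝ) → ℝ}
    (hf : ContDiffOn ℝ (⊤ : ℕ∞) f U) (hg : ContDiffOn ℝ (⊤ : ℕ∞) g U)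
    (I : List (Fin n)) :
    ∀ x ∈ U, vfSeq X I (fun y => f y * g y) x =
      ((splits I).map (fun p => vfSeq X p.1 f x * vfSeq X p.2 g x)).sum := by
  induction I with
  | nil => intro x hx; simp [splits, vfSeq]
  | cons i I ih =>
    intro x hx
    have dA : ∀ J, DifferentiableAt ℝ (vfSeq X J f) x := fun J =>
      ((vfSeq_contDiffOn hU hXs hf J).differentiableOn (by simp)).differentiableAt
        (hU.mem_nhds hx)
    have dB : ∀ J, DifferentiableAt ℝ (vfSeq X J g) x := fun J =>
      ((vfSeq_contDiffOn hU hXs hg J).differentiableOn (by simp)).differentiableAt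
        (hU.mem_nhds hx)
    have heq : vfSeq X I (fun y => f y * g y) =ᶠ[𝓝 x]
        fun y => ((splits I).map (fun p => vfSeq X p.1 f y * vfSeq X p.2 g y)).sum :=
      Filter.eventuallyEq_of_mem (hU.mem_nhds hx) fun y hy => ih y hy
    show fderiv ℝ (vfSeq X I (fun y => f y * g y)) x (X i x) = _
    rw [heq.fderiv_eq,
      fderiv_listSum (splits I) (fun p y => vfSeq X p.1 f y * vfSeq X p.2 g y) x (X i x) (fun p _ => (dA p.1).mul (dB p.2))]
    have hterm : ∀ p ∈ splits I,
        fderiv ℝ (fun y => vfSeq X p.1 f y * vfSeq X p.2 g y) x (X i x) =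
          vfSeq X (i :: p.1) f x * vfSeq X p.2 g x
            + vfSeq X p.1 f x * vfSeq X (i :: p.2) g x := by
      intro p _
      rw [fderiv_fun_mul (dA p.1) (dB p.2)]
      show vfSeq X p.1 f x * fderiv ℝ (vfSeq X p.2 g) x (X i x)
          + vfSeq X p.2 g x * fderiv ℝ (vfSeq X p.1 f) x (X i x) = _
      show _ = fderiv ℝ (vfSeq X p.1 f) x (X i x) * vfSeq X p.2 g x
          + vfSeq X p.1 f x * fderiv ℝ (vfSeq X p.2 g) x (X i x)
      ring
    rw [List.map_congr_left hterm]
    show _ = ((splits (i :: I)).map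
      (fun p => vfSeq X p.1 f x * vfSeq X p.2 g x)).sum
    simp only [splits, List.map_flatMap]
    induction splits I with
    | nil => simp
    | cons q l ihl =>
      simp only [List.map_cons, List.sum_cons, List.flatMap_cons, List.sum_append,
        List.map_nil, List.sum_nil, List.flatMap]
      simp_all [List.flatMap]
      ring

/-- If `f` has order `N` and `g` has order `N'` at `a`, then `fg`
has order `≥ N + N'` at `a`. -/
theorem order_of_product
    {n : ℕ} (hn : 0 < n) {w : Fin n → ℕ} (hw : IsWeight w)
    {V : Set (Fin n → ℝ)} (hV : IsOpen V)
    {X : Fin n → (Fin n → ℝ) → (Fin n → ℝ)} (hX : IsHFrame w X V)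
    {a : Fin n → ℝ} (ha : a ∈ V)
    {f g : (Fin n → ℝ) → ℝ} {Uf Ug : Set (Fin n → ℝ)}
    (hUf : Uf ∈ 𝓝 a) (hf : ContDiffOn ℝ (⊤ : ℕ∞) f Uf)
    (hUg : Ug ∈ 𝓝 a) (hg : ContDiffOn ℝ (⊤ : ℕ∞) g Ug)
    {N N' : ℕ} (hfo : OrderEq w X f a N) (hgo : OrderEq w X g a N') :
    OrderGe w X (fun x => f x * g x) a (N + N') := by
  intro I hI
  set U : Set (Fin n → ℝ) := V ∩ (interior Uf ∩ interior Ug) with hUdef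
  have hUopen : IsOpen U := hV.inter (isOpen_interior.inter isOpen_interior)
  have haU : a ∈ U :=
    ⟨ha, mem_interior_iff_mem_nhds.2 hUf, mem_interior_iff_mem_nhds.2 hUg⟩
  have hXs : ∀ j, ContDiffOn ℝ (⊤ : ℕ∞) (X j) U := fun j =>
    (hX.smooth j).mono Set.inter_subset_left
  have hf' : ContDiffOn ℝ (⊤ : ℕ∞) f U :=
    hf.mono ((Set.inter_subset_right.trans Set.inter_subset_left).trans interior_subset)
  have hg' : ContDiffOn ℝ (⊤ : ℕ∞) g U :=
    hg.mono ((Set.inter_subset_right.trans Set.inter_subset_right).trans interior_subset)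
  rw [vfSeq_mul hUopen hXs hf' hg' I a haU]
  apply List.sum_eq_zero
  intro y hy
  obtain ⟨p, hp, rfl⟩ := List.mem_map.1 hy
  have hsum := splits_seqW w I p hp
  by_cases h1 : seqW w p.1 < N
  · rw [hfo.1 p.1 h1, zero_mul]
  · have h2 : seqW w p.2 < N' := by omega
    rw [hgo.1 p.2 h2, mul_zero]

end Carnot
end

section
/- Let X_1,…,X_n be smooth vector fields on an open neighborhood of 0 in ℝⁿ with X_j(0) = e_j (the j-th standard basis vector) for all j, and let h be a polynomial on ℝⁿ which is homogeneous of (ordinary) degree m. Then for every multi-index α: X^α h(0) = ∂^α h(0) if |α| = m, and X^α h(0) = 0 if |α| < m. -/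
open scoped BigOperators
open Filter Topology

namespace Carnot

-- ===================== auxiliary material for Statement 3 =====================

section Statement3Aux

variable {n : ℕ}

/-- The constant standard frame `E_i = e_i`. -/
def stdVF (n : ℕ) : Fin n → (Fin n → ℝ) → (Fin n → ℝ) := fun i _ => Pi.single i 1

/-- `f` is a polynomial which is homogeneous of ordinary degree `m`. -/
def HomPoly {n : ℕ} (m : ℕ) (f : (Fin n → ℝ) → ℝ) : Prop :=
  ∃ (c : (Fin n → ℕ) → ℝ) (s : Finset (Fin n → ℕ)),
    (∀ α ∈ s, mlen α = m) ∧ ∀ x, f x = ∑ α ∈ s, c α * monom α x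

lemma contDiff_monom (α : Fin n → ℕ) : ContDiff ℝ (⊤ : ℕ∞) (monom α) := by
  have h : monom α = fun x : Fin n → ℝ => ∏ i, x i ^ α i := rfl
  rw [h]
  exact contDiff_prod fun i _ => (contDiff_apply ℝ ℝ i).pow (α i)

lemma HomPoly.contDiff {m : ℕ} {f : (Fin n → ℝ) → ℝ} (hf : HomPoly m f) :
    ContDiff ℝ (⊤ : ℕ∞) f := by
  obtain ⟨c, s, -, hfx⟩ := hf
  have h : f = fun x => ∑ α ∈ s, c α * monom α x := funext hfx
  rw [h]
  exact ContDiff.sum fun α _ => contDiff_const.mul (contDiff_monom α)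

lemma HomPoly.eval_zero {m : ℕ} {f : (Fin n → ℝ) → ℝ} (hf : HomPoly m f)
    (hm : 1 ≤ m) : f 0 = 0 := by
  obtain ⟨c, s, hs, hfx⟩ := hf
  rw [hfx]
  apply Finset.sum_eq_zero
  intro α hα
  obtain ⟨i, hi⟩ : ∃ i, α i ≠ 0 := by
    by_contra hcon
    push_neg at hcon
    have h0 : mlen α = 0 := Finset.sum_eq_zero fun i _ => hcon i
    have := hs α hα
    omega
  have hz : monom α (0 : Fin n → ℝ) = 0 :=
    Finset.prod_eq_zero (Finset.mem_univ i) (by simp [zero_pow hi])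
  simp [hz]

lemma monom_hasFDerivAt (α : Fin n → ℕ) (x : Fin n → ℝ) :
    HasFDerivAt (monom α)
      (∑ i, (∏ j ∈ Finset.univ.erase i, x j ^ α j) •
        (((α i : ℝ) * x i ^ (α i - 1)) •
          ContinuousLinearMap.proj (R := ℝ) (φ := fun _ : Fin n => ℝ) i)) x := by
  have h : ∀ i ∈ Finset.univ, HasFDerivAt (fun y : Fin n → ℝ => y i ^ α i)
      (((α i : ℝ) * x i ^ (α i - 1)) •
        ContinuousLinearMap.proj (R := ℝ) (φ := fun _ : Fin n => ℝ) i) x := by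
    intro i _
    have h1 : HasFDerivAt (fun y : Fin n → ℝ => y i)
        (ContinuousLinearMap.proj (R := ℝ) (φ := fun _ : Fin n => ℝ) i) x :=
      (ContinuousLinearMap.proj (R := ℝ) (φ := fun _ : Fin n => ℝ) i).hasFDerivAt
    exact (hasDerivAt_pow (α i) (x i)).comp_hasFDerivAt x h1
  exact HasFDerivAt.finset_prod h

lemma fderiv_monom_single (α : Fin n → ℕ) (x : Fin n → ℝ) (k : Fin n) :
    fderiv ℝ (monom α) x (Pi.single k 1) =
      (α k : ℝ) * x k ^ (α k - 1) * ∏ j ∈ Finset.univ.erase k, x j ^ α j := by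
  rw [(monom_hasFDerivAt α x).fderiv]
  rw [ContinuousLinearMap.sum_apply]
  have hterm : ∀ i : Fin n,
      ((∏ j ∈ Finset.univ.erase i, x j ^ α j) •
        (((α i : ℝ) * x i ^ (α i - 1)) •
          ContinuousLinearMap.proj (R := ℝ) (φ := fun _ : Fin n => ℝ) i))
        (Pi.single k (1 : ℝ)) =
      if i = k then (α k : ℝ) * x k ^ (α k - 1) * ∏ j ∈ Finset.univ.erase k, x j ^ α j
      else 0 := by
    intro i
    simp only [ContinuousLinearMap.smul_apply, ContinuousLinearMap.proj_apply,
      Pi.single_apply, smul_eq_mul]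
    by_cases hik : i = k
    · subst hik; simp; ring
    · simp [Ne.symm hik, hik]
  rw [Finset.sum_congr rfl fun i _ => hterm i]
  rw [Finset.sum_ite_eq' Finset.univ k
    (fun _ => (α k : ℝ) * x k ^ (α k - 1) * ∏ j ∈ Finset.univ.erase k, x j ^ α j)]
  simp

lemma monom_update (α : Fin n → ℕ) (k : Fin n) (x : Fin n → ℝ) :
    monom (Function.update α k (α k - 1)) x =
      x k ^ (α k - 1) * ∏ j ∈ Finset.univ.erase k, x j ^ α j := by
  have h : monom (Function.update α k (α k - 1)) x
      = ∏ j, x j ^ (Function.update α k (α k - 1) j) := rfl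
  rw [h, ← Finset.mul_prod_erase Finset.univ _ (Finset.mem_univ k)]
  congr 1
  · simp
  · apply Finset.prod_congr rfl
    intro j hj
    rw [Function.update_apply, if_neg (Finset.mem_erase.mp hj).1]

lemma mlen_update (α : Fin n → ℕ) (k : Fin n) (hk : 0 < α k) :
    mlen (Function.update α k (α k - 1)) = mlen α - 1 := by
  have h1 : mlen (Function.update α k (α k - 1))
      = (α k - 1) + ∑ j ∈ Finset.univ \ {k}, α j := by
    unfold mlen
    rw [Finset.sum_update_of_mem (Finset.mem_univ k)]
  have h2 : mlen α = α k + ∑ j ∈ Finset.univ \ {k}, α j := by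
    unfold mlen
    rw [Finset.sum_eq_add_sum_sdiff_singleton_of_mem (Finset.mem_univ k)]
  omega

lemma HomPoly.deriv {m : ℕ} {f : (Fin n → ℝ) → ℝ} (hf : HomPoly m f) (k : Fin n) :
    HomPoly (m - 1) (fun x => fderiv ℝ f x (Pi.single k 1)) := by
  classical
  obtain ⟨c, s, hs, hfx⟩ := hf
  have hfe : f = fun x => ∑ α ∈ s, c α * monom α x := funext hfx
  refine ⟨fun β => ((β k + 1 : ℕ) : ℝ) * c (Function.update β k (β k + 1)),
    (s.filter fun α => 0 < α k).image (fun α => Function.update α k (α k - 1)),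
    ?_, ?_⟩
  · intro β hβ
    simp only [Finset.mem_image, Finset.mem_filter] at hβ
    obtain ⟨γ, ⟨hγs, hγk⟩, rfl⟩ := hβ
    rw [mlen_update γ k hγk, hs γ hγs]
  · intro x
    have hder : fderiv ℝ f x (Pi.single k 1)
        = ∑ α ∈ s, c α * fderiv ℝ (monom α) x (Pi.single k 1) := by
      rw [hfe, fderiv_fun_sum fun α _ =>
        ((monom_hasFDerivAt α x).differentiableAt.const_mul (c α))]
      rw [ContinuousLinearMap.sum_apply]
      refine Finset.sum_congr rfl fun α _ => ?_
      rw [fderiv_const_mul (monom_hasFDerivAt α x).differentiableAt (c α)]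
      simp
    have hinj : ∀ a ∈ s.filter fun α => 0 < α k, ∀ b ∈ s.filter fun α => 0 < α k,
        Function.update a k (a k - 1) = Function.update b k (b k - 1) → a = b := by
      intro a ha b hb hab
      simp only [Finset.mem_filter] at ha hb
      funext j
      by_cases hj : j = k
      · subst hj
        have h3 := congrFun hab j
        simp only [Function.update_self] at h3
        omega
      · have h3 := congrFun hab j
        simpa [Function.update_apply, hj] using h3
    have hside : ∀ γ ∈ s, c γ * fderiv ℝ (monom γ) x (Pi.single k 1) ≠ 0
        → 0 < γ k := by
      intro γ hγ hne
      rcases Nat.eq_zero_or_pos (γ k) with h0 | h0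
      · exfalso; apply hne; rw [fderiv_monom_single]; simp [h0]
      · exact h0
    show fderiv ℝ f x (Pi.single k 1) = _
    rw [hder, Finset.sum_image hinj, ← Finset.sum_filter_of_ne hside]
    refine Finset.sum_congr rfl fun α hα => ?_
    simp only [Finset.mem_filter] at hα
    obtain ⟨hαs, hαk⟩ := hα
    have hupd : Function.update (Function.update α k (α k - 1)) k
        ((Function.update α k (α k - 1)) k + 1) = α := by
      funext j
      by_cases hj : j = k
      · subst hj; simp only [Function.update_self]; omega
      · simp [Function.update_apply, hj]
    have hu : Function.update α k (α k - 1) k = α k - 1 :=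
      Function.update_self k (α k - 1) α
    have hcast : ((α k - 1 + 1 : ℕ) : ℝ) = (α k : ℝ) := by
      congr 1; omega
    beta_reduce
    rw [fderiv_monom_single, monom_update, hupd, hu, hcast]
    ring

/-- `f ↦ ∂^I f` maps homogeneous polynomials of degree `m` to homogeneous
polynomials of degree `m - |I|`. -/
lemma pdSeq_homPoly {m : ℕ} {f : (Fin n → ℝ) → ℝ} (hf : HomPoly m f) :
    ∀ I : List (Fin n), HomPoly (m - I.length) (vfSeq (stdVF n) I f)
  | [] => by
    simp only [List.length_nil, Nat.sub_zero]
    exact hf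
  | i :: I => by
    have h1 : HomPoly (m - I.length) (vfSeq (stdVF n) I f) := pdSeq_homPoly hf I
    have h2 := h1.deriv i
    have h3 : vfSeq (stdVF n) (i :: I) f
        = fun x => fderiv ℝ (vfSeq (stdVF n) I f) x (Pi.single i 1) := rfl
    rw [h3]
    simpa [Nat.sub_sub] using h2

/-- Component of a smooth vector field is smooth. -/
lemma contDiffOn_comp_apply {U : Set (Fin n → ℝ)} {Y : (Fin n → ℝ) → (Fin n → ℝ)}
    (hY : ContDiffOn ℝ (⊤ : ℕ∞) Y U) (k : Fin n) : ContDiffOn ℝ (⊤ : ℕ∞) (fun x => Y x k) U :=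
  (contDiff_apply ℝ ℝ k).comp_contDiffOn hY

/-- Linear-algebra helper: expand a continuous linear functional along the
standard basis. -/
lemma clm_apply_eq_sum (L : (Fin n → ℝ) →L[ℝ] ℝ) (v : Fin n → ℝ) :
    L v = ∑ k, v k * L (Pi.single k 1) := by
  have hv : v = ∑ k, Pi.single k (v k) := (Finset.univ_sum_single v).symm
  conv_lhs => rw [hv]
  rw [map_sum]
  refine Finset.sum_congr rfl fun k _ => ?_
  have hsingle : (Pi.single k (v k) : Fin n → ℝ)
      = v k • (Pi.single k 1 : Fin n → ℝ) := by
    funext j; by_cases hj : j = k <;> simp [Pi.single_apply, hj]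
  rw [hsingle, map_smul, smul_eq_mul]

/-- Certificates for remainders: sums of terms `c(x) p(x)` where `c` is smooth
on `U`, `p` is a homogeneous polynomial, and the combined order is at least `q`
(`c` vanishing at `0` contributes one order). -/
inductive Vrep (U : Set (Fin n → ℝ)) (q : ℕ) : ((Fin n → ℝ) → ℝ) → Prop
  | zero : Vrep U q (fun _ => 0)
  | add {u v : (Fin n → ℝ) → ℝ} : Vrep U q u → Vrep U q v →
      Vrep U q (fun x => u x + v x)
  | term (c p : (Fin n → ℝ) → ℝ) (d : ℕ)
      (hc : ContDiffOn ℝ (⊤ : ℕ∞) c U) (hp : HomPoly d p)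
      (hq : q ≤ d ∨ (c 0 = 0 ∧ q ≤ d + 1)) :
      Vrep U q (fun x => c x * p x)

lemma Vrep.sum {U : Set (Fin n → ℝ)} {q : ℕ} {ι : Type*} :
    ∀ (s : Finset ι) (f : ι → (Fin n → ℝ) → ℝ), (∀ i ∈ s, Vrep U q (f i)) →
    Vrep U q (fun x => ∑ i ∈ s, f i x) := by
  classical
  intro s
  induction s using Finset.induction_on with
  | empty =>
    intro f h
    simp only [Finset.sum_empty]
    exact Vrep.zero
  | @insert a t ha ih =>
    intro f h
    simp only [Finset.sum_insert ha]
    exact (h a (Finset.mem_insert_self a t)).add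
      (ih f fun i hi => h i (Finset.mem_insert_of_mem hi))

lemma Vrep.diffAt {U : Set (Fin n → ℝ)} {q : ℕ} {u : (Fin n → ℝ) → ℝ}
    (hU : IsOpen U) (h : Vrep U q u) : ∀ x ∈ U, DifferentiableAt ℝ u x := by
  induction h with
  | zero => exact fun x hx => differentiableAt_const 0
  | add h1 h2 ih1 ih2 => exact fun x hx => (ih1 x hx).add (ih2 x hx)
  | term c p d hc hp hq =>
    intro x hx
    exact ((hc.contDiffAt (hU.mem_nhds hx)).differentiableAt (by simp)).mul
      ((hp.contDiff.differentiable (by simp)).differentiableAt)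

lemma Vrep.eval {U : Set (Fin n → ℝ)} {q : ℕ} {u : (Fin n → ℝ) → ℝ}
    (h : Vrep U q u) (hq : 1 ≤ q) : u 0 = 0 := by
  induction h with
  | zero => rfl
  | add h1 h2 ih1 ih2 =>
    show _ + _ = (0 : ℝ)
    rw [ih1, ih2, add_zero]
  | term c p d hc hp hqd =>
    show c 0 * p 0 = 0
    rcases hqd with h1 | ⟨h0, -⟩
    · rw [hp.eval_zero (le_trans hq h1), mul_zero]
    · rw [h0, zero_mul]

lemma Vrep.vf_step {U : Set (Fin n → ℝ)} (hU : IsOpen U)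
    {X : Fin n → (Fin n → ℝ) → (Fin n → ℝ)} (hX : ∀ j, ContDiffOn ℝ (⊤ : ℕ∞) (X j) U)
    {q : ℕ} {u : (Fin n → ℝ) → ℝ} (h : Vrep U q u) (j : Fin n) :
    ∃ v, Vrep U (q - 1) v ∧ ∀ x ∈ U, vf (X j) u x = v x := by
  classical
  induction h with
  | zero =>
    refine ⟨fun _ => 0, Vrep.zero, fun x hx => ?_⟩
    show fderiv ℝ (fun _ => (0 : ℝ)) x (X j x) = 0
    simp
  | @add u' v' h1 h2 ih1 ih2 =>
    obtain ⟨v1, hv1, he1⟩ := ih1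
    obtain ⟨v2, hv2, he2⟩ := ih2
    refine ⟨fun x => v1 x + v2 x, hv1.add hv2, fun x hx => ?_⟩
    have d1 := h1.diffAt hU x hx
    have d2 := h2.diffAt hU x hx
    have e1 : fderiv ℝ u' x (X j x) = v1 x := he1 x hx
    have e2 : fderiv ℝ v' x (X j x) = v2 x := he2 x hx
    show fderiv ℝ (fun y => u' y + v' y) x (X j x) = v1 x + v2 x
    rw [fderiv_fun_add d1 d2, ContinuousLinearMap.add_apply, e1, e2]
  | term c p d hc hp hqd =>
    have hq1 : q - 1 ≤ d := by rcases hqd with h1 | ⟨-, h1⟩ <;> omega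
    refine ⟨fun x => (fderivWithin ℝ c U x) (X j x) * p x
        + ∑ k, (c x * X j x k) * fderiv ℝ p x (Pi.single k 1), ?_, ?_⟩
    · apply Vrep.add
      · refine Vrep.term _ p d ?_ hp (Or.inl hq1)
        exact (hc.fderivWithin hU.uniqueDiffOn (by simp)).clm_apply (hX j)
      · apply Vrep.sum
        intro k _
        refine Vrep.term (fun x => c x * X j x k) _ (d - 1)
          (hc.mul (contDiffOn_comp_apply (hX j) k)) (hp.deriv k) ?_
        rcases hqd with h1 | ⟨h0, h1⟩
        · exact Or.inl (by omega)
        · exact Or.inr ⟨by show c 0 * X j 0 k = 0; rw [h0, zero_mul], by omega⟩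
    · intro x hx
      have hcx : DifferentiableAt ℝ c x :=
        (hc.contDiffAt (hU.mem_nhds hx)).differentiableAt (by simp)
      have hpx : DifferentiableAt ℝ p x :=
        (hp.contDiff.differentiable (by simp)).differentiableAt
      have hcd : fderiv ℝ c x (X j x) = (fderivWithin ℝ c U x) (X j x) := by
        rw [fderivWithin_of_isOpen hU hx]
      show fderiv ℝ (fun y => c y * p y) x (X j x) = _
      rw [fderiv_fun_mul hcx hpx, ContinuousLinearMap.add_apply,
        ContinuousLinearMap.smul_apply, ContinuousLinearMap.smul_apply,
        smul_eq_mul, smul_eq_mul, clm_apply_eq_sum (fderiv ℝ p x) (X j x), hcd]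
      rw [Finset.mul_sum, add_comm]
      congr 1
      · exact mul_comm _ _
      · exact Finset.sum_congr rfl fun k _ => by ring

lemma expand_vfSeq {U : Set (Fin n → ℝ)} (hU : IsOpen U)
    {X : Fin n → (Fin n → ℝ) → (Fin n → ℝ)} (hX : ∀ j, ContDiffOn ℝ (⊤ : ℕ∞) (X j) U)
    (hX0 : ∀ j, X j 0 = Pi.single j 1) :
    ∀ (I : List (Fin n)) {d : ℕ} {p : (Fin n → ℝ) → ℝ}, HomPoly d p →
      I.length ≤ d →
      ∃ R, Vrep U (d - I.length + 1) R ∧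
        ∀ x ∈ U, vfSeq X I p x = vfSeq (stdVF n) I p x + R x := by
  classical
  intro I
  induction I with
  | nil =>
    intro d p hp _
    exact ⟨fun _ => 0, Vrep.zero, fun x hx => by simp [vfSeq]⟩
  | cons i I ih =>
    intro d p hp hlen
    have hcons : (i :: I).length = I.length + 1 := by simp
    have hlen' : I.length ≤ d := by omega
    obtain ⟨R, hR, heq⟩ := ih hp hlen'
    have hpdHom : HomPoly (d - I.length) (vfSeq (stdVF n) I p) :=
      pdSeq_homPoly hp I
    obtain ⟨v2, hv2rep, hv2eq⟩ := hR.vf_step hU hX i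
    have hlevel : d - I.length + 1 - 1 = d - (i :: I).length + 1 := by omega
    refine ⟨fun x => (∑ k, ((X i x k - if k = i then 1 else 0)
        * fderiv ℝ (vfSeq (stdVF n) I p) x (Pi.single k 1))) + v2 x, ?_, ?_⟩
    · apply Vrep.add
      · apply Vrep.sum
        intro k _
        refine Vrep.term (fun x => X i x k - if k = i then 1 else 0) _
          (d - I.length - 1)
          (ContDiffOn.sub (contDiffOn_comp_apply (hX i) k) contDiffOn_const)
          (hpdHom.deriv k) ?_
        refine Or.inr ⟨?_, ?_⟩
        · show X i 0 k - _ = 0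
          rw [hX0 i, Pi.single_apply]
          simp
        · omega
      · exact hlevel ▸ hv2rep
    · intro x hx
      have hEq : vfSeq X (i :: I) p x
          = fderiv ℝ (fun y => vfSeq (stdVF n) I p y + R y) x (X i x) := by
        show fderiv ℝ (vfSeq X I p) x (X i x) = _
        congr 1
        apply Filter.EventuallyEq.fderiv_eq
        filter_upwards [hU.mem_nhds hx] with y hy using heq y hy
      have hdpd : DifferentiableAt ℝ (vfSeq (stdVF n) I p) x :=
        (hpdHom.contDiff.differentiable (by simp)).differentiableAt
      have hdR : DifferentiableAt ℝ R x := hR.diffAt hU x hx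
      have hstd : vfSeq (stdVF n) (i :: I) p x
          = fderiv ℝ (vfSeq (stdVF n) I p) x (Pi.single i 1) := rfl
      have hvfR : fderiv ℝ R x (X i x) = v2 x := hv2eq x hx
      rw [hEq, fderiv_fun_add hdpd hdR, ContinuousLinearMap.add_apply,
        clm_apply_eq_sum (fderiv ℝ (vfSeq (stdVF n) I p) x) (X i x), hvfR, hstd]
      have hsum : ∑ k, X i x k * fderiv ℝ (vfSeq (stdVF n) I p) x (Pi.single k 1)
          = fderiv ℝ (vfSeq (stdVF n) I p) x (Pi.single i 1)
            + ∑ k, ((X i x k - if k = i then 1 else 0)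
              * fderiv ℝ (vfSeq (stdVF n) I p) x (Pi.single k 1)) := by
        have hterm : ∀ k : Fin n,
            X i x k * fderiv ℝ (vfSeq (stdVF n) I p) x (Pi.single k 1)
            = (if k = i then fderiv ℝ (vfSeq (stdVF n) I p) x (Pi.single k 1) else 0)
              + ((X i x k - if k = i then 1 else 0)
                * fderiv ℝ (vfSeq (stdVF n) I p) x (Pi.single k 1)) := by
          intro k
          by_cases hk : k = i <;> simp [hk] <;> ring
        rw [Finset.sum_congr rfl fun k _ => hterm k, Finset.sum_add_distrib]
        congr 1
        rw [Finset.sum_ite_eq' Finset.univ i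
          (fun k => fderiv ℝ (vfSeq (stdVF n) I p) x (Pi.single k 1))]
        simp
      rw [hsum]
      ring

lemma multiList_length (α : Fin n → ℕ) : (multiList α).length = mlen α := by
  rw [multiList, List.length_flatMap, mlen, Fin.sum_univ_def]
  congr 1
  apply List.map_congr_left
  intro i _
  simp

end Statement3Aux

/-- If `X_j(0) = e_j` and `h` is a polynomial homogeneous of ordinary
degree `m`, then `X^α h(0) = ∂^α h(0)` when `|α| = m` and `X^α h(0) = 0` when
`|α| < m`. -/
theorem vfPow_homogeneous_poly
    {n : ℕ} (hn : 0 < n) {w : Fin n → ℕ} (hw : IsWeight w)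
    {U : Set (Fin n → ℝ)} (hU : IsOpen U) (h0 : (0 : Fin n → ℝ) ∈ U)
    {X : Fin n → (Fin n → ℝ) → (Fin n → ℝ)}
    (hX : ∀ j, ContDiffOn ℝ (⊤ : ℕ∞) (X j) U)
    (hX0 : ∀ j, X j 0 = Pi.single j 1)
    {m : ℕ} {h : (Fin n → ℝ) → ℝ}
    (c : (Fin n → ℕ) → ℝ) (s : Finset (Fin n → ℕ))
    (hs : ∀ α ∈ s, mlen α = m)
    (hh : ∀ x, h x = ∑ α ∈ s, c α * monom α x)
    (α : Fin n → ℕ) :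
    (mlen α = m → vfPow X α h 0 = pdPow α h 0) ∧
    (mlen α < m → vfPow X α h 0 = 0) := by
  have hHom : HomPoly m h := ⟨c, s, hs, hh⟩
  have hlen := multiList_length α
  constructor
  · intro hm
    obtain ⟨R, hR, heq⟩ := expand_vfSeq hU hX hX0 (multiList α) hHom (by omega)
    have hR0 : R 0 = 0 := hR.eval (by omega)
    have h2 := heq 0 h0
    show vfSeq X (multiList α) h 0 = vfSeq (stdVF n) (multiList α) h 0
    rw [h2, hR0, add_zero]
  · intro hm
    obtain ⟨R, hR, heq⟩ := expand_vfSeq hU hX hX0 (multiList α) hHom (by omega)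
    have hR0 : R 0 = 0 := hR.eval (by omega)
    have hp := pdSeq_homPoly hHom (multiList α)
    have hz : vfSeq (stdVF n) (multiList α) h 0 = 0 := hp.eval_zero (by omega)
    have h2 := heq 0 h0
    show vfSeq X (multiList α) h 0 = 0
    rw [h2, hz, hR0, add_zero]


end Carnot
end
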